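/- Given an edge-labeled rooted tree G = (V, E, Ψ), the suffix links compatible with G are unique: if S and S′ are maps such that PHS(T) is isomorphic to (V, E, Ψ, S) (as an edge-labeled graph with distinguished arc set, via a bijection of V fixing the tree structure and labels) for some string T, and PHS(T′) is isomorphic to (V, E, Ψ, S′) for some string T′, then S = S′. -/

import Mathlib

/-- `heapHList T i = [h_0, h_1, …, h_i]`: `h_0 = ε` and `h_i` is the shortest
prefix of `T[i:]` (the suffix of `T` starting at 1-indexed position `i`) not
among `h_0, …, h_{i-1}` (falling back to `T[i:]` itself if every prefix
already occurs there). -/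
def heapHList {α : Type*} [DecidableEq α] (T : List α) : ℕ → List (List α)
  | 0 => [[]]
  | i + 1 =>
    let prev := heapHList T i
    let suf := T.drop i
    prev ++ [(((List.range (suf.length + 1)).find?
        (fun k => decide (suf.take k ∉ prev))).elim suf fun k => suf.take k)]

/-- `heapH T i = h_i`. -/
def heapH {α : Type*} [DecidableEq α] (T : List α) (i : ℕ) : List α :=
  (heapHList T i).getD i []

/-- `T` ends with a letter that occurs nowhere else in `T`
(1-indexed: `T[i] ≠ T[n]` for all `1 ≤ i ≤ n - 1`). -/
def EndsUnique {α : Type*} (T : List α) : Prop :=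
  ∀ i, i + 1 < T.length → T[i]? ≠ T[T.length - 1]?

/-- `T` is a valid source text: nonempty and ending with a unique letter. -/
def ValidText {α : Type*} (T : List α) : Prop :=
  1 ≤ T.length ∧ EndsUnique T

/-- `φ` is an isomorphism of `PHS(T)` (on nodes `{0, …, n}`, `n = |T|`) with
the edge-labeled graph `(V, E, Ψ)` equipped with the (total) map `S` as its
distinguished arc set: `φ` is a bijection from `{0, …, n}` onto `V` carrying
the edges of `PH(T)` onto `E`, preserving labels, and carrying the suffix
links of `PHS(T)` onto `S`. -/
def IsoPHS {α V : Type*} [DecidableEq α] (T : List α)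
    (E : V → V → Prop) (Ψ : V → V → α) (S : V → V) (φ : ℕ → V) : Prop :=
  (∀ v : V, ∃ i ≤ T.length, φ i = v) ∧
  (∀ i j, i ≤ T.length → j ≤ T.length → φ i = φ j → i = j) ∧
  (∀ i j, i ≤ T.length → j ≤ T.length →
    (E (φ i) (φ j) ↔ ∃ c : α, heapH T i ++ [c] = heapH T j)) ∧
  (∀ i j, i ≤ T.length → j ≤ T.length → ∀ c : α,
    heapH T i ++ [c] = heapH T j → Ψ (φ i) (φ j) = c) ∧
  (∀ i, 1 ≤ i → i ≤ T.length →
    ∃ j ≤ T.length, φ j = S (φ i) ∧ ∃ c : α, heapH T i = c :: heapH T j)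


section Aux
variable {α : Type*} [DecidableEq α]

lemma find?_range_min {p : ℕ → Bool} : ∀ {m k : ℕ}, (List.range m).find? p = some k →
    p k = true ∧ ∀ j < k, p j = false := by
  intro m
  induction m with
  | zero => intro k h; simp at h
  | succ m ih =>
    intro k h
    rw [List.range_succ, List.find?_append] at h
    cases hf : (List.range m).find? p with
    | some k' =>
      rw [hf] at h; simp only [Option.some_or] at h
      cases h; exact ih hf
    | none =>
      rw [hf] at h; simp only [Option.none_or] at h
      cases hp : p m with
      | true =>
        rw [List.find?_cons, hp] at h
        cases h
        refine ⟨hp, fun j hj => ?_⟩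
        have := List.find?_eq_none.mp hf j (List.mem_range.mpr hj)
        simpa using this
      | false =>
        rw [List.find?_cons, hp] at h
        simp at h

lemma heapHList_succ (T : List α) (i : ℕ) :
    heapHList T (i + 1) = heapHList T i ++
      [(((List.range ((T.drop i).length + 1)).find?
        (fun k => decide ((T.drop i).take k ∉ heapHList T i))).elim (T.drop i)
        fun k => (T.drop i).take k)] := rfl

lemma heapHList_length (T : List α) (i : ℕ) : (heapHList T i).length = i + 1 := by
  induction i with
  | zero => rfl
  | succ i ih => rw [heapHList_succ, List.length_append, ih]; rfl

lemma heapHList_getD (T : List α) : ∀ {i j : ℕ}, j ≤ i →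
    (heapHList T i).getD j [] = heapH T j := by
  intro i
  induction i with
  | zero => intro j hj; interval_cases j; rfl
  | succ i ih =>
    intro j hj
    rcases Nat.lt_or_ge j (i + 1) with h | h
    · rw [heapHList_succ, List.getD_append _ _ _ j (by rw [heapHList_length]; omega)]
      exact ih (by omega)
    · have : j = i + 1 := by omega
      subst this; rfl

lemma heapH_zero (T : List α) : heapH T 0 = [] := rfl

lemma mem_heapHList (T : List α) (i : ℕ) (l : List α) :
    l ∈ heapHList T i ↔ ∃ j ≤ i, heapH T j = l := by
  rw [List.mem_iff_getElem]
  constructor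
  · rintro ⟨k, hk, rfl⟩
    have hk' : k ≤ i := by rw [heapHList_length] at hk; omega
    refine ⟨k, hk', ?_⟩
    rw [← heapHList_getD T hk', List.getD_eq_getElem _ _ hk]
  · rintro ⟨j, hj, rfl⟩
    have hk : j < (heapHList T i).length := by rw [heapHList_length]; omega
    exact ⟨j, hk, by rw [← List.getD_eq_getElem _ ([] : List α) hk, heapHList_getD T hj]⟩

lemma heapH_succ (T : List α) (i : ℕ) :
    heapH T (i + 1) = ((List.range ((T.drop i).length + 1)).find?
      (fun k => decide ((T.drop i).take k ∉ heapHList T i))).elim (T.drop i)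
      (fun k => (T.drop i).take k) := by
  unfold heapH
  rw [heapHList_succ]
  have h : i + 1 = (heapHList T i).length := (heapHList_length T i).symm
  rw [h, List.getD_eq_getElem _ _ (by simp), List.getElem_append_right (le_refl _)]
  simp

lemma heapH_prefix (T : List α) (i : ℕ) : heapH T (i + 1) <+: T.drop i := by
  rw [heapH_succ]
  cases hf : (List.range ((T.drop i).length + 1)).find?
      (fun k => decide ((T.drop i).take k ∉ heapHList T i)) with
  | none => simp
  | some k => simp [List.take_prefix]

lemma heapH_spec (T : List α) (hT : ValidText T) {i : ℕ} (hi : i < T.length) :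
    heapH T (i + 1) ∉ heapHList T i ∧
    ∃ j ≤ i, ∃ c, heapH T j ++ [c] = heapH T (i + 1) := by
  set suf := T.drop i with hsuf
  set prev := heapHList T i with hprev
  have hL : suf.length = T.length - i := by rw [hsuf, List.length_drop]
  have hLpos : 1 ≤ suf.length := by omega
  -- the full suffix is new
  have hfull : suf ∉ prev := by
    intro hmem
    rw [hprev, mem_heapHList] at hmem
    obtain ⟨j, hj, hjeq⟩ := hmem
    cases j with
    | zero =>
      rw [heapH_zero] at hjeq
      have := hjeq ▸ hLpos
      simp at this
    | succ m =>
      have hpre : heapH T (m + 1) <+: T.drop m := heapH_prefix T m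
      have hlen : (heapH T (m + 1)).length = suf.length := by rw [hjeq]
      have hlt : suf.length - 1 < (heapH T (m + 1)).length := by omega
      have hlt2 : suf.length - 1 < (T.drop m).length :=
        lt_of_lt_of_le hlt (List.IsPrefix.length_le hpre)
      have h1 : (heapH T (m + 1))[suf.length - 1]'hlt = (T.drop m)[suf.length - 1]'hlt2 :=
        hpre.getElem hlt
      have h2 : (T.drop m)[suf.length - 1]'hlt2 = T[m + (suf.length - 1)]'(by
          rw [List.length_drop] at hlt2; omega) := List.getElem_drop
      have h3 : ∀ (hh : suf.length - 1 < suf.length),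
          suf[suf.length - 1]'hh = T[i + (suf.length - 1)]'(by
            rw [hL] at hh ⊢; omega) := fun hh => List.getElem_drop
      -- from hjeq, the elements agree
      have hel : (heapH T (m + 1))[suf.length - 1]'hlt = suf[suf.length - 1]'(by omega) := by
        congr 1 <;> rw [hjeq]
      have hmlt : m + 1 ≤ i := hj
      have hne := hT.2 (m + (suf.length - 1)) (by omega)
      apply hne
      have e1 : i + (suf.length - 1) = T.length - 1 := by omega
      have key : T[m + (suf.length - 1)]'(by omega) = T[i + (suf.length - 1)]'(by omega) :=
        h2.symm.trans (h1.symm.trans (hel.trans (h3 (by omega))))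
      rw [show T.length - 1 = i + (suf.length - 1) from e1.symm]
      rw [List.getElem?_eq_getElem (show m + (suf.length - 1) < T.length by omega),
        List.getElem?_eq_getElem (show i + (suf.length - 1) < T.length by omega)]
      exact congrArg some key
  have hpL : (fun k => decide (suf.take k ∉ prev)) suf.length = true := by
    simp only [List.take_length, decide_eq_true_eq]
    exact hfull
  obtain ⟨k0, hk0⟩ : ∃ k0, (List.range (suf.length + 1)).find?
      (fun k => decide (suf.take k ∉ prev)) = some k0 := by
    cases hf : (List.range (suf.length + 1)).find?
        (fun k => decide (suf.take k ∉ prev)) with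
    | none =>
      exact absurd hpL (List.find?_eq_none.mp hf suf.length (List.mem_range.mpr (by omega)))
    | some k => exact ⟨k, rfl⟩
  obtain ⟨hpk0, hmin⟩ := find?_range_min hk0
  have hk0le : k0 < suf.length + 1 := List.mem_range.mp (List.mem_of_find?_eq_some hk0)
  have hHi : heapH T (i + 1) = suf.take k0 := by
    rw [heapH_succ, ← hsuf, ← hprev, hk0]
    rfl
  have hk0pos : 1 ≤ k0 := by
    by_contra hc
    have h0 : k0 = 0 := by omega
    rw [h0] at hpk0
    simp only [List.take_zero, decide_eq_true_eq] at hpk0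
    exact (of_decide_eq_true hpk0) ((mem_heapHList T i []).mpr ⟨0, Nat.zero_le _, heapH_zero T⟩)
  constructor
  · rw [hHi]
    simpa using hpk0
  · have hm := hmin (k0 - 1) (by omega)
    simp only [decide_eq_false_iff_not, not_not] at hm
    rw [mem_heapHList] at hm
    obtain ⟨j, hj, hjeq⟩ := hm
    have hk1 : k0 - 1 < suf.length := by omega
    refine ⟨j, hj, suf[k0 - 1]'hk1, ?_⟩
    rw [hjeq, hHi]
    have : k0 = (k0 - 1) + 1 := by omega
    conv_rhs => rw [this]
    rw [List.take_succ, List.getElem?_eq_getElem hk1]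
    rfl

lemma heapH_parent (T : List α) (hT : ValidText T) {i : ℕ} (h1 : 1 ≤ i) (h2 : i ≤ T.length) :
    ∃ j ≤ T.length, ∃ c, heapH T j ++ [c] = heapH T i := by
  obtain ⟨m, rfl⟩ : ∃ m, i = m + 1 := ⟨i - 1, by omega⟩
  obtain ⟨-, j, hj, c, hc⟩ := heapH_spec T hT (show m < T.length by omega)
  exact ⟨j, by omega, c, hc⟩

lemma heapH_ne_nil (T : List α) (hT : ValidText T) {i : ℕ} (h1 : 1 ≤ i) (h2 : i ≤ T.length) :
    heapH T i ≠ [] := by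
  obtain ⟨j, hj, c, hc⟩ := heapH_parent T hT h1 h2
  rw [← hc]; simp

lemma heapH_inj (T : List α) (hT : ValidText T) {i j : ℕ} (hi : i ≤ T.length)
    (hj : j ≤ T.length) (h : heapH T i = heapH T j) : i = j := by
  by_contra hne
  wlog hlt : j < i generalizing i j
  · exact this hj hi h.symm (Ne.symm hne) (by omega)
  obtain ⟨m, rfl⟩ : ∃ m, i = m + 1 := ⟨i - 1, by omega⟩
  obtain ⟨hnot, -⟩ := heapH_spec T hT (show m < T.length by omega)
  exact hnot (h ▸ (mem_heapHList T m _).mpr ⟨j, by omega, rfl⟩)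

end Aux

section Iso
variable {α V : Type*} [DecidableEq α]
variable {E : V → V → Prop} {Ψ : V → V → α} {S : V → V}

lemma root_char {T : List α} {φ : ℕ → V} (hT : ValidText T) (hiso : IsoPHS T E Ψ S φ)
    {i : ℕ} (hi : i ≤ T.length) : (∃ u, E u (φ i)) ↔ heapH T i ≠ [] := by
  obtain ⟨hsurj, hinj, hE, hΨ, hS⟩ := hiso
  constructor
  · rintro ⟨u, hu⟩
    obtain ⟨j, hj, rfl⟩ := hsurj u
    obtain ⟨c, hc⟩ := (hE j i hj hi).mp hu
    rw [← hc]; simp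
  · intro hne
    have hi1 : 1 ≤ i := by
      rcases Nat.eq_zero_or_pos i with rfl | h
      · exact absurd (heapH_zero T) hne
      · exact h
    obtain ⟨j, hj, c, hc⟩ := heapH_parent T hT hi1 hi
    exact ⟨φ j, (hE j i hj hi).mpr ⟨c, hc⟩⟩

variable {S' : V → V}

lemma labels_eq {T T' : List α} {φ φ' : ℕ → V} (hT : ValidText T) (hT' : ValidText T')
    (hiso : IsoPHS T E Ψ S φ) (hiso' : IsoPHS T' E Ψ S' φ') :
    ∀ L i i', (heapH T i).length ≤ L → i ≤ T.length → i' ≤ T'.length →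
      φ i = φ' i' → heapH T i = heapH T' i' := by
  intro L
  induction L with
  | zero =>
    intro i i' hlen hi hi' hφ
    have h0 : heapH T i = [] := List.length_eq_zero_iff.mp (by omega)
    have : ¬ ∃ u, E u (φ' i') := by
      rw [← hφ, root_char hT hiso hi]
      simp [h0]
    rw [h0]
    have := (root_char hT' hiso' hi').not.mp this
    simp only [not_not] at this
    exact this.symm
  | succ L ih =>
    intro i i' hlen hi hi' hφ
    rcases eq_or_ne (heapH T i) [] with h0 | h0
    · have : ¬ ∃ u, E u (φ' i') := by
        rw [← hφ, root_char hT hiso hi]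
        simp [h0]
      rw [h0]
      have := (root_char hT' hiso' hi').not.mp this
      simp only [not_not] at this
      exact this.symm
    · obtain ⟨hsurj, hinj, hE, hΨ, hS⟩ := hiso
      obtain ⟨hsurj', hinj', hE', hΨ', hS'l⟩ := hiso'
      have hi1 : 1 ≤ i := by
        rcases Nat.eq_zero_or_pos i with rfl | h
        · exact absurd (heapH_zero T) h0
        · exact h
      obtain ⟨j, hj, c, hc⟩ := heapH_parent T hT hi1 hi
      -- heapH T' i' is nonempty
      have hEe : E (φ j) (φ i) := (hE j i hj hi).mpr ⟨c, hc⟩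
      have hne' : heapH T' i' ≠ [] :=
        (root_char hT' ⟨hsurj', hinj', hE', hΨ', hS'l⟩ hi').mp ⟨φ j, hφ ▸ hEe⟩
      have hi1' : 1 ≤ i' := by
        rcases Nat.eq_zero_or_pos i' with rfl | h
        · exact absurd (heapH_zero T') hne'
        · exact h
      obtain ⟨j', hj', c', hc'⟩ := heapH_parent T' hT' hi1' hi'
      have hEe' : E (φ' j') (φ' i') := (hE' j' i' hj' hi').mpr ⟨c', hc'⟩
      -- φ' j' = φ a for some a, and a = j
      obtain ⟨a, ha, haeq⟩ := hsurj (φ' j')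
      have hEa : E (φ a) (φ i) := by rw [haeq, hφ]; exact hEe'
      obtain ⟨d, hd⟩ := (hE a i ha hi).mp hEa
      have haj : a = j := by
        apply heapH_inj T hT ha hj
        have := hd.trans hc.symm
        exact (List.append_inj' this rfl).1
      have hφj : φ j = φ' j' := by rw [← haj, haeq]
      -- induction: labels of parents agree
      have hlenj : (heapH T j).length ≤ L := by
        have := congrArg List.length hc
        simp at this
        omega
      have hpar : heapH T j = heapH T' j' := ih j j' hlenj hj hj' hφj
      -- labels of the two edges agree
      have h1 : Ψ (φ j) (φ i) = c := hΨ j i hj hi c hc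
      have h2 : Ψ (φ' j') (φ' i') = c' := hΨ' j' i' hj' hi' c' hc'
      have hcc : c = c' := by rw [← h1, ← h2, hφj, hφ]
      rw [← hc, ← hc', hpar, hcc]

lemma nodes_eq {T T' : List α} {φ φ' : ℕ → V} (hT : ValidText T) (hT' : ValidText T')
    (hiso : IsoPHS T E Ψ S φ) (hiso' : IsoPHS T' E Ψ S' φ') :
    ∀ L i i', (heapH T i).length ≤ L → i ≤ T.length → i' ≤ T'.length →
      heapH T i = heapH T' i' → φ i = φ' i' := by
  have key : ∀ L i i', (heapH T i).length ≤ L → i ≤ T.length → i' ≤ T'.length →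
      heapH T i = heapH T' i' → heapH T i = [] → φ i = φ' i' := by
    intro L i i' hlen hi hi' hh h0
    obtain ⟨hsurj, hinj, hE, hΨ, hS⟩ := hiso
    obtain ⟨hsurj', hinj', hE', hΨ', hS'l⟩ := hiso'
    have hieq : i = 0 := by
      by_contra hc
      exact heapH_ne_nil T hT (by omega) hi h0
    have hieq' : i' = 0 := by
      by_contra hc
      exact heapH_ne_nil T' hT' (by omega) hi' (hh ▸ h0)
    subst hieq; subst hieq'
    obtain ⟨j, hj, hjeq⟩ := hsurj (φ' 0)
    rcases Nat.eq_zero_or_pos j with rfl | hjpos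
    · exact hjeq
    · exfalso
      have hne : heapH T j ≠ [] := heapH_ne_nil T hT hjpos hj
      have hedge : ∃ u, E u (φ j) :=
        (root_char hT ⟨hsurj, hinj, hE, hΨ, hS⟩ hj).mpr hne
      rw [hjeq] at hedge
      have := (root_char hT' ⟨hsurj', hinj', hE', hΨ', hS'l⟩ (Nat.zero_le _)).mp hedge
      exact this (heapH_zero T')
  intro L
  induction L with
  | zero =>
    intro i i' hlen hi hi' hh
    exact key 0 i i' hlen hi hi' hh (List.length_eq_zero_iff.mp (by omega))
  | succ L ih =>
    intro i i' hlen hi hi' hh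
    rcases eq_or_ne (heapH T i) [] with h0 | h0
    · exact key (L+1) i i' hlen hi hi' hh h0
    · obtain ⟨hsurj, hinj, hE, hΨ, hS⟩ := hiso
      obtain ⟨hsurj', hinj', hE', hΨ', hS'l⟩ := hiso'
      have hi1 : 1 ≤ i := by
        rcases Nat.eq_zero_or_pos i with rfl | h
        · exact absurd (heapH_zero T) h0
        · exact h
      have hi1' : 1 ≤ i' := by
        rcases Nat.eq_zero_or_pos i' with rfl | h
        · rw [heapH_zero T'] at hh; exact absurd hh h0
        · exact h
      obtain ⟨j, hj, c, hc⟩ := heapH_parent T hT hi1 hi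
      obtain ⟨j', hj', c', hc'⟩ := heapH_parent T' hT' hi1' hi'
      have hpar : heapH T j = heapH T' j' ∧ c = c' := by
        have := hc.trans (hh.trans hc'.symm)
        obtain ⟨h1, h2⟩ := List.append_inj' this rfl
        exact ⟨h1, by simpa using h2⟩
      have hlenj : (heapH T j).length ≤ L := by
        have := congrArg List.length hc
        simp at this
        omega
      have hφj : φ j = φ' j' := ih j j' hlenj hj hj' hpar.1
      -- φ' i' is some φ b; its parent edge from φ j has label c, so heapH T b = heapH T i
      obtain ⟨b, hb, hbeq⟩ := hsurj (φ' i')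
      have hEe' : E (φ' j') (φ' i') := (hE' j' i' hj' hi').mpr ⟨c', hc'⟩
      have hEb : E (φ j) (φ b) := by rw [hbeq, hφj]; exact hEe'
      obtain ⟨e, he⟩ := (hE j b hj hb).mp hEb
      have h1 : Ψ (φ j) (φ b) = e := hΨ j b hj hb e he
      have h2 : Ψ (φ' j') (φ' i') = c' := hΨ' j' i' hj' hi' c' hc'
      have hec : e = c' := by rw [← h1, ← h2, hφj, hbeq]
      have hbi : b = i := by
        apply heapH_inj T hT hb hi
        rw [← he, hec, ← hpar.2, hc]
      rw [← hbi, hbeq]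

end Iso

/-- Given an edge-labeled rooted tree `G = (V, E, Ψ)`, the
suffix links compatible with `G` are unique: if `PHS(T) ≅ (V, E, Ψ, S)` for
some string `T` and `PHS(T') ≅ (V, E, Ψ, S')` for some string `T'`, then
`S = S'` on the domain of the suffix links, i.e. on all non-root nodes
(the nodes having a parent). -/
theorem statement10 {α V : Type*} [DecidableEq α]
    (E : V → V → Prop) (Ψ : V → V → α) (S S' : V → V)
    (h : ∃ (T : List α) (φ : ℕ → V), ValidText T ∧ IsoPHS T E Ψ S φ)
    (h' : ∃ (T' : List α) (φ' : ℕ → V), ValidText T' ∧ IsoPHS T' E Ψ S' φ') :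
    ∀ v : V, (∃ u, E u v) → S v = S' v := by
  obtain ⟨T, φ, hT, hiso⟩ := h
  obtain ⟨T', φ', hT', hiso'⟩ := h'
  intro v hv
  obtain ⟨hsurj, hinj, hE, hΨ, hS⟩ := id hiso
  obtain ⟨hsurj', hinj', hE', hΨ', hS'⟩ := id hiso'
  obtain ⟨i, hi, rfl⟩ := hsurj v
  have hne : heapH T i ≠ [] := (root_char hT hiso hi).mp hv
  have hi1 : 1 ≤ i := by
    rcases Nat.eq_zero_or_pos i with rfl | h
    · exact absurd (heapH_zero T) hne
    · exact h
  obtain ⟨i', hi', hφi⟩ := hsurj' (φ i)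
  have hlab : heapH T i = heapH T' i' := labels_eq hT hT' hiso hiso' _ i i' le_rfl hi hi' hφi.symm
  have hne' : heapH T' i' ≠ [] := hlab ▸ hne
  have hi1' : 1 ≤ i' := by
    rcases Nat.eq_zero_or_pos i' with rfl | h
    · exact absurd (heapH_zero T') hne'
    · exact h
  obtain ⟨j, hj, hjS, c, hcj⟩ := hS i hi1 hi
  obtain ⟨j', hj', hjS', c', hcj'⟩ := hS' i' hi1' hi'
  have htails : heapH T j = heapH T' j' ∧ c = c' := by
    have := hcj.symm.trans (hlab.trans hcj')
    exact ⟨by injection this, by injection this⟩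
  have hφj : φ j = φ' j' := nodes_eq hT hT' hiso hiso' _ j j' le_rfl hj hj' htails.1
  rw [← hjS, hφj, hjS', hφi]
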